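/- arXiv:1307.0068 — 4 statements merged into one kernel-verified Lean document; each statement's English description precedes it below -/
import Mathlib

section
/- Let F : N → C, G : N → D and K : C → D be functors and δ : K∘F ⇒ G a natural transformation exhibiting K as the Kan extension of G along F. If L : M → N is a functor admitting a fully faithful right adjoint, then the whiskered natural transformation δ_L : K∘F∘L ⇒ G∘L exhibits K as the Kan extension of G∘L along F∘L. -/
/-!
A left adjoint `L` with fully faithful right adjoint is a localization functor, and
precomposition with a localization functor is fully faithful on functor categories. So every
`γ : (L ⋙ F) ⋙ F' ⟶ L ⋙ G` is the whiskering of a unique `γ' : F ⋙ F' ⟶ G`, and an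
`α : F' ⟶ K` factors `γ` through `δ_L` exactly when it factors `γ'` through `δ`.
-/

open CategoryTheory

universe v₁ v₂ v₃ v₄ u₁ u₂ u₃ u₄

namespace CategoryTheory.Localization

theorem kanExtension_whisker
    {N : Type u₁} [Category.{v₁} N] {C : Type u₂} [Category.{v₂} C]
    {D : Type u₃} [Category.{v₃} D] {M : Type u₄} [Category.{v₄} M]
    (F : N ⥤ C) (G : N ⥤ D) (K : C ⥤ D) (δ : F ⋙ K ⟶ G)
    (hKan : ∀ (F' : C ⥤ D) (γ : F ⋙ F' ⟶ G),
      ∃! α : F' ⟶ K, ∀ n : N, α.app (F.obj n) ≫ δ.app n = γ.app n)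
    (L : M ⥤ N) (W : MorphismProperty M) [L.IsLocalization W]
    (F' : C ⥤ D) (γ : (L ⋙ F) ⋙ F' ⟶ L ⋙ G) :
    ∃! α : F' ⟶ K, ∀ m : M,
      α.app ((L ⋙ F).obj m) ≫ (Functor.whiskerLeft L δ).app m = γ.app m := by
  have := full_whiskeringLeft L W D
  obtain ⟨γ, rfl⟩ :=
    ((Functor.whiskeringLeft M N D).obj L).map_surjective (X := F ⋙ F') (Y := G) γ
  refine (existsUnique_congr fun α => ?_).mpr (hKan F' γ)
  constructor
  · intro h
    exact congr_app (natTrans_ext L W (τ := Functor.whiskerLeft F α ≫ δ) (τ' := γ) h)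
  · exact fun h m => h (L.obj m)

end CategoryTheory.Localization

/-- Lemma 7.1.
Let `F : N ⥤ C`, `G : N ⥤ D` and `K : C ⥤ D` be functors and `δ : K ∘ F ⟶ G` a natural
transformation exhibiting `K` as the Kan extension of `G` along `F` (in the pointwise
sense used in the paper: for every functor `F' : C ⥤ D` and every natural transformation
`γ : F' ∘ F ⟶ G` there is a unique `α : F' ⟶ K` with `δ_N ∘ α_{F(N)} = γ_N` for all `N`).
If `L : M ⥤ N` admits a fully faithful right adjoint, then the whiskered natural
transformation `δ_L : K ∘ F ∘ L ⟶ G ∘ L` exhibits `K` as the Kan extension of `G ∘ L`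
along `F ∘ L`. -/
theorem kanExtension_whisker_of_fullyFaithful_rightAdjoint
    {N : Type u₁} [Category.{v₁} N] {C : Type u₂} [Category.{v₂} C]
    {D : Type u₃} [Category.{v₃} D] {M : Type u₄} [Category.{v₄} M]
    (F : N ⥤ C) (G : N ⥤ D) (K : C ⥤ D) (δ : F ⋙ K ⟶ G)
    (hKan : ∀ (F' : C ⥤ D) (γ : F ⋙ F' ⟶ G),
      ∃! α : F' ⟶ K, ∀ n : N, α.app (F.obj n) ≫ δ.app n = γ.app n)
    (L : M ⥤ N) (R : N ⥤ M) (adj : L ⊣ R) [R.Full] [R.Faithful]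
    (F' : C ⥤ D) (γ : (L ⋙ F) ⋙ F' ⟶ L ⋙ G) :
    ∃! α : F' ⟶ K, ∀ m : M,
      α.app ((L ⋙ F).obj m) ≫ (Functor.whiskerLeft L δ).app m = γ.app m := by
  have := adj.isLocalization
  exact Localization.kanExtension_whisker F G K δ hKan L
    ((MorphismProperty.isomorphisms N).inverseImage L) F' γ
end

section
/- Let F : N → C and G : N → D be functors such that: (i) for all morphisms f and g of N, F(f) = F(g) implies G(f) = G(g); and (ii) for every object C of C there exists an object U of N with F(U) = C such that for every object N of N the map Hom_N(U, N) → Hom_C(C, F(N)) given by the action of F is surjective. Then there exist a functor K : C → D and a natural transformation κ : K∘F ⇒ G exhibiting K as the Kan extension of G along F; moreover K may be chosen so that K(C) = G(U) for a choice of U as in (ii). -/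
/-!
Choose for every `c` a weakly universal `U c` with `F (U c) = c`, and put `K c = G (U c)`.
A morphism `φ : c ⟶ c'` lifts along `F` to some `U c ⟶ U c'`, and by (i) all such lifts have
the same image under `G`, which defines `K φ`; likewise the counit at `n` is `G` of a lift of
`𝟙 (F n)`. A transformation `γ : F ⋙ F' ⟶ G` factors through the counit via its components
at the objects `U c`, and the factorisation is unique because a transformation `β : F' ⟶ K`
is recovered at `c` from its component at `F (U c) = c` followed by the counit at `U c`.
-/

open CategoryTheory

universe v₁ v₂ v₃ u₁ u₂ u₃

namespace CategoryTheory.Functor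

variable {N : Type u₁} [Category.{v₁} N] {C : Type u₂} [Category.{v₂} C]
  {D : Type u₃} [Category.{v₃} D]

def HasWeaklyUniversalLifts (F : N ⥤ C) : Prop :=
  ∀ c : C, ∃ (U : N) (hU : F.obj U = c),
    ∀ (m : N) (φ : c ⟶ F.obj m), ∃ h : U ⟶ m, F.map h = eqToHom hU ≫ φ

namespace HasWeaklyUniversalLifts

variable {F : N ⥤ C} (hF : F.HasWeaklyUniversalLifts)

noncomputable def obj (c : C) : N := (hF c).choose

lemma F_obj (c : C) : F.obj (hF.obj c) = c := (hF c).choose_spec.choose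

noncomputable def lift {c : C} (m : N) (φ : c ⟶ F.obj m) : hF.obj c ⟶ m :=
  ((hF c).choose_spec.choose_spec m φ).choose

lemma map_lift {c : C} (m : N) (φ : c ⟶ F.obj m) :
    F.map (hF.lift m φ) = eqToHom (hF.F_obj c) ≫ φ :=
  ((hF c).choose_spec.choose_spec m φ).choose_spec

noncomputable def liftHom {c c' : C} (φ : c ⟶ c') : hF.obj c ⟶ hF.obj c' :=
  hF.lift _ (φ ≫ eqToHom (hF.F_obj c').symm)

lemma map_liftHom {c c' : C} (φ : c ⟶ c') :
    F.map (hF.liftHom φ) = eqToHom (hF.F_obj c) ≫ φ ≫ eqToHom (hF.F_obj c').symm :=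
  hF.map_lift _ _

noncomputable def liftId (n : N) : hF.obj (F.obj n) ⟶ n := hF.lift n (𝟙 (F.obj n))

lemma map_liftId (n : N) : F.map (hF.liftId n) = eqToHom (hF.F_obj (F.obj n)) := by
  rw [liftId, map_lift, Category.comp_id]

variable (G : N ⥤ D) (hG : ∀ {X Y : N} (f g : X ⟶ Y), F.map f = F.map g → G.map f = G.map g)

noncomputable def ran : C ⥤ D where
  obj c := G.obj (hF.obj c)
  map φ := G.map (hF.liftHom φ)
  map_id c := by
    rw [← G.map_id]
    exact hG _ _ (by simp [map_liftHom])
  map_comp φ ψ := by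
    rw [← G.map_comp]
    exact hG _ _ (by simp [map_liftHom])

noncomputable def ranCounit : F ⋙ hF.ran G hG ⟶ G where
  app n := G.map (hF.liftId n)
  naturality n m f := by
    change G.map (hF.liftHom (F.map f)) ≫ G.map (hF.liftId m) = G.map (hF.liftId n) ≫ G.map f
    rw [← G.map_comp, ← G.map_comp]
    exact hG _ _ (by simp [map_liftHom, map_liftId])

noncomputable def ranLift {F' : C ⥤ D} (γ : F ⋙ F' ⟶ G) : F' ⟶ hF.ran G hG where
  app c := eqToHom (congrArg F'.obj (hF.F_obj c).symm) ≫ γ.app (hF.obj c)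
  naturality c c' φ := by
    change F'.map φ ≫ eqToHom _ ≫ γ.app _ = (eqToHom _ ≫ γ.app _) ≫ G.map (hF.liftHom φ)
    rw [Category.assoc, ← γ.naturality, Functor.comp_map, map_liftHom]
    simp [eqToHom_map]

lemma ranLift_app_comp_ranCounit_app {F' : C ⥤ D} (γ : F ⋙ F' ⟶ G) (n : N) :
    (hF.ranLift G hG γ).app (F.obj n) ≫ (hF.ranCounit G hG).app n = γ.app n := by
  change (eqToHom _ ≫ γ.app _) ≫ G.map (hF.liftId n) = γ.app n
  rw [Category.assoc, ← γ.naturality, Functor.comp_map, map_liftId]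
  simp [eqToHom_map]

lemma ran_map_eqToHom_F_obj (c : C) :
    (hF.ran G hG).map (eqToHom (hF.F_obj c)) = (hF.ranCounit G hG).app (hF.obj c) :=
  hG _ _ (by simp [map_liftHom, map_liftId])

lemma app_eq_app_F_obj_comp_ranCounit_app {F' : C ⥤ D} (β : F' ⟶ hF.ran G hG) (c : C) :
    β.app c = eqToHom (congrArg F'.obj (hF.F_obj c).symm) ≫
      β.app (F.obj (hF.obj c)) ≫ (hF.ranCounit G hG).app (hF.obj c) := by
  have hβ : β.app c = eqToHom (congrArg F'.obj (hF.F_obj c).symm) ≫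
      β.app (F.obj (hF.obj c)) ≫ (hF.ran G hG).map (eqToHom (hF.F_obj c)) := by
    rw [← β.naturality]
    simp [eqToHom_map]
  rwa [ran_map_eqToHom_F_obj] at hβ

lemma ran_hom_ext {F' : C ⥤ D} {β₁ β₂ : F' ⟶ hF.ran G hG}
    (h : ∀ n : N, β₁.app (F.obj n) ≫ (hF.ranCounit G hG).app n =
      β₂.app (F.obj n) ≫ (hF.ranCounit G hG).app n) : β₁ = β₂ := by
  ext c
  rw [app_eq_app_F_obj_comp_ranCounit_app, h, ← app_eq_app_F_obj_comp_ranCounit_app]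

end HasWeaklyUniversalLifts

end CategoryTheory.Functor

/-- Remark after Theorem 5.1.
Let `F : N ⥤ C` and `G : N ⥤ D` be functors such that
(i) for all parallel morphisms `f, g` of `N`, `F(f) = F(g)` implies `G(f) = G(g)`, and
(ii) for every object `c` of `C` there is an object `U` of `N` with `F(U) = c` such that
for every object `m` of `N` the map `Hom_N(U, m) → Hom_C(c, F(m))` given by the action
of `F` is surjective.  Then there exist a functor `K : C ⥤ D` and a natural
transformation `κ : K ∘ F ⟶ G` exhibiting `K` as the Kan extension of `G` along `F`;
moreover, `K` may be chosen so that `K(c) = G(U)` for a choice of `U` as in (ii). -/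
theorem kanExtension_of_weakly_universal_objects
    {N : Type u₁} [Category.{v₁} N] {C : Type u₂} [Category.{v₂} C]
    {D : Type u₃} [Category.{v₃} D]
    (F : N ⥤ C) (G : N ⥤ D)
    (h1 : ∀ {X Y : N} (f g : X ⟶ Y), F.map f = F.map g → G.map f = G.map g)
    (h2 : ∀ c : C, ∃ (U : N) (hU : F.obj U = c),
      ∀ (m : N) (φ : c ⟶ F.obj m), ∃ h : U ⟶ m, F.map h = eqToHom hU ≫ φ) :
    ∃ (K : C ⥤ D) (κ : F ⋙ K ⟶ G),
      (∀ (F' : C ⥤ D) (γ : F ⋙ F' ⟶ G),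
        ∃! α : F' ⟶ K, ∀ n : N, α.app (F.obj n) ≫ κ.app n = γ.app n) ∧
      ∀ c : C, ∃ (U : N) (hU : F.obj U = c),
        (∀ (m : N) (φ : c ⟶ F.obj m), ∃ h : U ⟶ m, F.map h = eqToHom hU ≫ φ) ∧
        K.obj c = G.obj U := by
  have hF : F.HasWeaklyUniversalLifts := h2
  refine ⟨hF.ran G h1, hF.ranCounit G h1, fun F' γ => ?_, fun c => ?_⟩
  · refine ⟨hF.ranLift G h1 γ, hF.ranLift_app_comp_ranCounit_app G h1 γ, fun β hβ => ?_⟩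
    exact hF.ran_hom_ext G h1 fun n => by
      rw [hβ, hF.ranLift_app_comp_ranCounit_app]
  · exact ⟨hF.obj c, hF.F_obj c, fun m φ => ⟨hF.lift m φ, hF.map_lift m φ⟩, rfl⟩
end

section
/- If Γ is an admissible Galois structure in which monadic extensions are pullback-stable (the pullback of a monadic extension along any morphism exists and is a monadic extension), then normal extensions and coverings are pullback-stable: the pullback of a normal extension (respectively, of a covering) along any morphism of C is again a normal extension (respectively, a covering). -/
open CategoryTheory CategoryTheory.Limits

universe v₁ v₂ u₁ u₂

namespace GaloisPaper

/-- A Galois structure `Γ = (C, X, H, I, η, ε, E, F)`. -/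
structure GaloisStructure (C : Type u₁) [Category.{v₁} C] (X : Type u₂) [Category.{v₂} X] where
  I : C ⥤ X
  H : X ⥤ C
  adj : I ⊣ H
  fib : MorphismProperty C
  fibX : MorphismProperty X
  fib_of_iso : ∀ {A B : C} (f : A ⟶ B), IsIso f → fib f
  fibX_of_iso : ∀ {A B : X} (f : A ⟶ B), IsIso f → fibX f
  fib_pullback : ∀ {A B Z : C} (f : A ⟶ B) (g : Z ⟶ B), fib f →
    ∃ (P : C) (p₁ : P ⟶ A) (p₂ : P ⟶ Z), IsPullback p₁ p₂ f g ∧ fib p₂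
  fibX_pullback : ∀ {A B Z : X} (f : A ⟶ B) (g : Z ⟶ B), fibX f →
    ∃ (P : X) (p₁ : P ⟶ A) (p₂ : P ⟶ Z), IsPullback p₁ p₂ f g ∧ fibX p₂
  fib_comp : ∀ {A B Z : C} (f : A ⟶ B) (g : B ⟶ Z), fib f → fib g → fib (f ≫ g)
  fibX_comp : ∀ {A B Z : X} (f : A ⟶ B) (g : B ⟶ Z), fibX f → fibX g → fibX (f ≫ g)
  H_fib : ∀ {A B : X} (f : A ⟶ B), fibX f → fib (H.map f)
  I_fib : ∀ {A B : C} (f : A ⟶ B), fib f → fibX (I.map f)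

namespace GaloisStructure

variable {C : Type u₁} [Category.{v₁} C] {X : Type u₂} [Category.{v₂} X]
variable (Γ : GaloisStructure C X)

/-- A trivial covering: a fibration whose `η`-naturality square is a pullback. -/
def TrivialCovering {A B : C} (f : A ⟶ B) : Prop :=
  Γ.fib f ∧ IsPullback (Γ.adj.unit.app A) f ((Γ.I ⋙ Γ.H).map f) (Γ.adj.unit.app B)

/-- The full subcategory `(E ↓ B)` of the slice category over `B` given by fibrations. -/
abbrev SliceFib (B : C) := ObjectProperty.FullSubcategory (fun f : Over B => Γ.fib f.hom)

/-- The full subcategory `(F ↓ Y)` of the slice category over `Y : X` given by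
morphisms of the class `F`. -/
abbrev SliceFibX (Y : X) := ObjectProperty.FullSubcategory (fun f : Over Y => Γ.fibX f.hom)

/-- Composition with a fibration `p : E ⟶ B`, as a functor `(E ↓ E) ⥤ (E ↓ B)`;
the pullback functor `p*` is its right adjoint. -/
def compAlong {E B : C} (p : E ⟶ B) (hp : Γ.fib p) : Γ.SliceFib E ⥤ Γ.SliceFib B :=
  ObjectProperty.lift _ (ObjectProperty.ι _ ⋙ Over.map p)
    (fun f => Γ.fib_comp _ _ f.property hp)

/-- A monadic extension: a fibration `p` whose pullback functor
`p* : (E ↓ B) ⥤ (E ↓ E)` (i.e. the right adjoint of composition with `p`) is monadic. -/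
def MonadicExtension {E B : C} (p : E ⟶ B) : Prop :=
  ∃ hp : Γ.fib p, ∃ pstar : Γ.SliceFib B ⥤ Γ.SliceFib E,
    Nonempty (Γ.compAlong p hp ⊣ pstar) ∧ Nonempty (MonadicRightAdjoint pstar)

/-- A covering (central extension): a fibration whose pullback along some monadic
extension is a trivial covering. -/
def Covering {A B : C} (f : A ⟶ B) : Prop :=
  Γ.fib f ∧ ∃ (E : C) (p : E ⟶ B), Γ.MonadicExtension p ∧
    ∃ (P : C) (q : P ⟶ A) (r : P ⟶ E), IsPullback q r f p ∧ Γ.TrivialCovering r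

/-- A normal extension: a monadic extension whose kernel pair projections are
trivial coverings. -/
def NormalExtension {E B : C} (p : E ⟶ B) : Prop :=
  Γ.MonadicExtension p ∧ ∃ (R : C) (d c : R ⟶ E), IsPullback d c p p ∧
    Γ.TrivialCovering d ∧ Γ.TrivialCovering c

/-- The restriction `I^B : (E ↓ B) ⥤ (F ↓ I B)` of the reflection `I`. -/
def restrictI (B : C) : Γ.SliceFib B ⥤ Γ.SliceFibX (Γ.I.obj B) :=
  ObjectProperty.lift _ (ObjectProperty.ι _ ⋙ Over.post Γ.I)
    (fun f => Γ.I_fib _ f.property)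

/-- Admissibility of a Galois structure: each `H^B`, i.e. each right adjoint of
`I^B : (E ↓ B) ⥤ (F ↓ I B)`, is full and faithful. -/
def Admissible : Prop :=
  ∀ B : C, ∃ (HB : Γ.SliceFibX (Γ.I.obj B) ⥤ Γ.SliceFib B) (_ : Γ.restrictI B ⊣ HB),
    HB.Full ∧ HB.Faithful

/-- Pullback-stability of monadic extensions: the pullback of a monadic extension
along any morphism exists and is again a monadic extension. -/
def MonStable : Prop :=
  ∀ {E B Z : C} (p : E ⟶ B) (g : Z ⟶ B), Γ.MonadicExtension p →
    ∃ (P : C) (q : P ⟶ E) (r : P ⟶ Z), IsPullback q r p g ∧ Γ.MonadicExtension r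

/-- A weakly universal normal extension of `B`. -/
def WeaklyUniversal {U B : C} (u : U ⟶ B) : Prop :=
  Γ.NormalExtension u ∧ ∀ {E : C} (p : E ⟶ B), Γ.NormalExtension p → ∃ e : U ⟶ E, e ≫ p = u

/-- The category `NExt_Γ(C)` of normal extensions, a full subcategory of the arrow
category of `C`. -/
abbrev NExtCat := ObjectProperty.FullSubcategory (fun f : Arrow C => Γ.NormalExtension f.hom)

/-- The category `Ext_Γ(C)` of monadic extensions, a full subcategory of the arrow
category of `C`. -/
abbrev ExtCat := ObjectProperty.FullSubcategory (fun f : Arrow C => Γ.MonadicExtension f.hom)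

/-- The codomain functor `NExt_Γ(C) ⥤ C`. -/
def codF : Γ.NExtCat ⥤ C := ObjectProperty.ι _ ⋙ Arrow.rightFunc

/-- The codomain functor `Ext_Γ(C) ⥤ C`. -/
def codExt : Γ.ExtCat ⥤ C := ObjectProperty.ι _ ⋙ Arrow.rightFunc

/-- The inclusion `NExt_Γ(C) ⥤ Ext_Γ(C)`: every normal extension is monadic. -/
def inclNExt : Γ.NExtCat ⥤ Γ.ExtCat :=
  ObjectProperty.lift _ (ObjectProperty.ι _) (fun p => p.property.1)

end GaloisStructure

end GaloisPaper

/-!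
Everything rests on pullback-stability of trivial coverings. If `f : A ⟶ B` is a trivial
covering, `A` is the pullback of `H I f` along `η_B`, so maps `T ⟶ A` over `B` are the same as
maps `I T ⟶ I A` over `I B`. For a pullback `P` of `f` along `g : Z ⟶ B` this identifies maps
`T ⟶ P` over `Z` with maps from `I T` into the pullback of `I f` along `I g`; since `H^Z` is fully
faithful, Yoneda makes the comparison map from `I P` an isomorphism, i.e. `I` preserves this
pullback. Applying `H` and pasting with the naturality squares of `η` shows that the `η`-square
of `P ⟶ Z` is a pullback.

Monadic extensions are stable by hypothesis, once one notes that two pullbacks differ by an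
isomorphism, which changes the pullback functor by an equivalence of slices and so preserves
monadicity (Beck). The kernel pair of a pullback of `p` is a pullback of the kernel pair of `p`,
and a covering split by `p` has its pullback along `g` split by the pullback of `p` along `g`.
-/

namespace CategoryTheory

section

variable {C D C' : Type*} [Category C] [Category D] [Category C']

theorem Functor.isSplitPair_of_iso {F G : D ⥤ C} (α : F ≅ G) {A B : D} {f g : A ⟶ B}
    [G.IsSplitPair f g] : F.IsSplitPair f g := by
  obtain ⟨Z, π, ⟨s⟩⟩ := HasSplitCoequalizer.splittable (f := G.map f) (g := G.map g)
  refine ⟨Z, α.hom.app B ≫ π, ⟨{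
    rightSection := s.rightSection ≫ α.inv.app B
    leftSection := α.hom.app B ≫ s.leftSection ≫ α.inv.app A
    condition := by simp [s.condition]
    rightSection_π := by simp
    leftSection_bottom := by
      simp only [Category.assoc, ← α.inv.naturality, s.leftSection_bottom_assoc,
        Iso.hom_inv_id_app]
    leftSection_top := by
      simp only [Category.assoc, ← α.inv.naturality, s.leftSection_top_assoc] }⟩⟩

theorem Functor.isSplitPair_of_comp_equivalence (R : D ⥤ C) (e : C ≌ C') {A B : D}
    {f g : A ⟶ B} [(R ⋙ e.functor).IsSplitPair f g] : R.IsSplitPair f g :=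
  have : ((R ⋙ e.functor) ⋙ e.inverse).IsSplitPair f g :=
    map_is_split_pair e.inverse ((R ⋙ e.functor).map f) ((R ⋙ e.functor).map g)
  R.isSplitPair_of_iso (Iso.isoCompInverse (Iso.refl (R ⋙ e.functor)))

theorem Adjunction.isIso_of_bijective_map_comp {L : C ⥤ D} {R : D ⥤ C} (adj : L ⊣ R)
    [R.Full] [R.Faithful] {w : C} {x : D} (φ : L.obj w ⟶ x)
    (hφ : ∀ T, Function.Bijective fun h : T ⟶ w => L.map h ≫ φ) : IsIso φ := by
  have : IsIso (adj.homEquiv w x φ) := isIso_of_yoneda_map_bijective _ fun T => by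
    convert (adj.homEquiv T x).bijective.comp (hφ T) using 1
    funext h
    exact (adj.homEquiv_naturality_left h φ).symm
  rw [← (adj.homEquiv w x).symm_apply_apply φ, adj.homEquiv_counit]
  infer_instance

end

variable {C D C' : Type*} [Category.{v₁} C] [Category.{v₁} D] [Category.{v₁} C']

theorem MonadicRightAdjoint.nonempty_comp_equivalence (R : D ⥤ C) [MonadicRightAdjoint R]
    (e : C ≌ C') : Nonempty (MonadicRightAdjoint (R ⋙ e.functor)) :=
  have : Monad.CreatesColimitOfIsSplitPair (R ⋙ e.functor) := ⟨fun f g _ =>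
    have := R.isSplitPair_of_comp_equivalence e (f := f) (g := g)
    have := Monad.createsGSplitCoequalizersOfMonadic R f g
    compCreatesColimit R e.functor⟩
  ⟨Monad.monadicOfCreatesGSplitCoequalizers (e.symm.toAdjunction.comp (monadicAdjunction R))⟩

end CategoryTheory

namespace CategoryTheory.IsPullback

variable {C : Type*} [Category C]

theorem exists_isPullback_kernelPair_fst {P E B Z R R' : C} {p : E ⟶ B} {g : Z ⟶ B}
    {q : P ⟶ E} {r : P ⟶ Z} {d c : R ⟶ E} {d' c' : R' ⟶ P} (sq : IsPullback q r p g)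
    (hR : IsPullback d c p p) (hR' : IsPullback d' c' r r) :
    ∃ m : R' ⟶ R, IsPullback m d' d q := by
  have hm : (d' ≫ q) ≫ p = (c' ≫ q) ≫ p := by
    simp only [Category.assoc, sq.w, reassoc_of% hR'.w]
  refine ⟨hR.lift _ _ hm, IsPullback.of_right ?_ (hR.lift_fst _ _ hm) hR.flip⟩
  have rect := hR'.flip.paste_horiz sq
  rwa [← hR.lift_snd _ _ hm, ← sq.w] at rect

theorem exists_isPullback_snd_of_commSq {P P₀ W A B Z E E' : C} {f : A ⟶ B} {g : Z ⟶ B}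
    {p : E ⟶ B} {q : P ⟶ A} {r : P ⟶ Z} {q₀ : P₀ ⟶ A} {r₀ : P₀ ⟶ E} {q' : E' ⟶ E}
    {p' : E' ⟶ Z} {w₁ : W ⟶ P₀} {w₂ : W ⟶ E'} (sq : IsPullback q r f g)
    (sq₀ : IsPullback q₀ r₀ f p) (hW : IsPullback w₁ w₂ r₀ q') (h : CommSq q' p' p g) :
    ∃ m : W ⟶ P, IsPullback m w₂ r p' := by
  have hn : (w₁ ≫ q₀) ≫ f = (w₂ ≫ p') ≫ g := by
    simp only [Category.assoc, sq₀.w, reassoc_of% hW.w, h.w]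
  refine ⟨sq.lift _ _ hn, IsPullback.of_right ?_ (sq.lift_snd _ _ hn) sq⟩
  have rect := hW.paste_horiz sq₀
  rwa [← sq.lift_fst _ _ hn, h.w] at rect

end CategoryTheory.IsPullback

namespace GaloisPaper
namespace GaloisStructure

variable {C : Type u₁} [Category.{v₁} C] {X : Type u₂} [Category.{v₂} X]

section

variable (Γ : GaloisStructure C X)

theorem fib_iso_comp {P P' Z : C} (e : P ⟶ P') [IsIso e] {r : P' ⟶ Z} (hr : Γ.fib r) :
    Γ.fib (e ≫ r) :=
  Γ.fib_comp _ _ (Γ.fib_of_iso e inferInstance) hr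

theorem fib_of_isPullback {P A B Z : C} {f : A ⟶ B} {g : Z ⟶ B} {q : P ⟶ A} {r : P ⟶ Z}
    (hf : Γ.fib f) (sq : IsPullback q r f g) : Γ.fib r := by
  obtain ⟨P', q', r', sq', hr'⟩ := Γ.fib_pullback f g hf
  rw [← sq.isoIsPullback_hom_snd _ _ sq']
  exact Γ.fib_iso_comp _ hr'

theorem exists_isPullback_of_fib {A B Z : C} {f : A ⟶ B} (hf : Γ.fib f) (g : Z ⟶ B) :
    ∃ (P : C) (q : P ⟶ A) (r : P ⟶ Z), IsPullback q r f g :=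
  let ⟨P, q, r, sq, _⟩ := Γ.fib_pullback f g hf
  ⟨P, q, r, sq⟩

instance (B : C) : ObjectProperty.IsClosedUnderIsomorphisms (fun f : Over B => Γ.fib f.hom) where
  of_iso e hf := by
    have : IsIso e.inv.left := inferInstanceAs (IsIso ((Over.forget B).map e.inv))
    rw [← Over.w e.inv]
    exact Γ.fib_iso_comp _ hf

noncomputable def compAlongEquivalence {P P' : C} (e : P ⟶ P') [IsIso e] :
    Γ.SliceFib P ≌ Γ.SliceFib P' :=
  (Over.mapIso (asIso e)).congrFullSubcategory (by
    ext T
    refine ⟨fun h => ?_, fun h => Γ.fib_comp _ _ h (Γ.fib_of_iso e inferInstance)⟩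
    simpa using Γ.fib_comp _ _ h (Γ.fib_of_iso (inv e) inferInstance))

def compAlongComp {E B B' : C} (p : E ⟶ B) (p' : B ⟶ B') (hp : Γ.fib p) (hp' : Γ.fib p') :
    Γ.compAlong p hp ⋙ Γ.compAlong p' hp' ≅ Γ.compAlong (p ≫ p') (Γ.fib_comp _ _ hp hp') :=
  ((ObjectProperty.fullyFaithfulι _).whiskeringRight _).preimageIso
    (Functor.isoWhiskerLeft (ObjectProperty.ι _) (Over.mapComp p p').symm)

end

section

variable {Γ : GaloisStructure C X}

theorem TrivialCovering.hom_ext {A B T : C} {f : A ⟶ B} (hf : Γ.TrivialCovering f)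
    {a a' : T ⟶ A} (hI : Γ.I.map a = Γ.I.map a') (h : a ≫ f = a' ≫ f) : a = a' :=
  hf.2.hom_ext (by
    calc a ≫ Γ.adj.unit.app A = Γ.adj.unit.app T ≫ Γ.H.map (Γ.I.map a) :=
          (Γ.adj.unit_naturality a).symm
      _ = a' ≫ Γ.adj.unit.app A := by rw [hI]; exact Γ.adj.unit_naturality a') h

theorem TrivialCovering.exists_lift {A B T : C} {f : A ⟶ B} (hf : Γ.TrivialCovering f)
    (u : T ⟶ B) (b : Γ.I.obj T ⟶ Γ.I.obj A) (hb : b ≫ Γ.I.map f = Γ.I.map u) :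
    ∃ a : T ⟶ A, a ≫ f = u ∧ Γ.I.map a = b := by
  have w : (Γ.adj.unit.app T ≫ Γ.H.map b) ≫ (Γ.I ⋙ Γ.H).map f = u ≫ Γ.adj.unit.app B := by
    rw [Functor.comp_map, Category.assoc, ← Γ.H.map_comp, hb]
    exact Γ.adj.unit_naturality u
  refine ⟨hf.2.lift _ u w, hf.2.lift_snd _ _ w, (Γ.adj.homEquiv _ _).injective ?_⟩
  rw [Adjunction.homEquiv_unit, Adjunction.homEquiv_unit]
  exact (Γ.adj.unit_naturality _).trans (hf.2.lift_fst _ _ w)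

theorem TrivialCovering.isPullback_map_I (hadm : Γ.Admissible) {P A B Z : C} {f : A ⟶ B}
    {g : Z ⟶ B} {q : P ⟶ A} {r : P ⟶ Z} (hf : Γ.TrivialCovering f) (sq : IsPullback q r f g) :
    IsPullback (Γ.I.map q) (Γ.I.map r) (Γ.I.map f) (Γ.I.map g) := by
  obtain ⟨Y, y₁, y₂, hY, hy₂⟩ := Γ.fibX_pullback (Γ.I.map f) (Γ.I.map g) (Γ.I_fib f hf.1)
  obtain ⟨HZ, adjZ, _, _⟩ := hadm Z
  let k : Γ.I.obj P ⟶ Y :=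
    hY.lift (Γ.I.map q) (Γ.I.map r) (by simp only [← Functor.map_comp, sq.w])
  have hk₁ : k ≫ y₁ = Γ.I.map q := hY.lift_fst _ _ _
  have hk₂ : k ≫ y₂ = Γ.I.map r := hY.lift_snd _ _ _
  let φ : (Γ.restrictI Z).obj ⟨Over.mk r, Γ.fib_of_isPullback hf.1 sq⟩ ⟶ ⟨Over.mk y₂, hy₂⟩ :=
    ObjectProperty.homMk (Over.homMk k hk₂)
  have : IsIso φ := adjZ.isIso_of_bijective_map_comp φ fun T => by
    constructor
    · intro h₁ h₂ hh
      have hl : Γ.I.map h₁.hom.left ≫ k = Γ.I.map h₂.hom.left ≫ k :=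
        congrArg (fun u => u.hom.left) hh
      have hr : h₁.hom.left ≫ r = h₂.hom.left ≫ r := (Over.w h₁.hom).trans (Over.w h₂.hom).symm
      refine ObjectProperty.hom_ext _ (Over.OverMorphism.ext (sq.hom_ext (hf.hom_ext ?_ ?_) hr))
      · simp only [Functor.map_comp, ← hk₁, reassoc_of% hl]
      · simp only [Category.assoc, sq.w, reassoc_of% hr]
    · intro ψ
      let b : Γ.I.obj T.obj.left ⟶ Y := ψ.hom.left
      have hb : b ≫ y₂ = Γ.I.map T.obj.hom := Over.w ψ.hom
      obtain ⟨a, ha, hIa⟩ := hf.exists_lift (T.obj.hom ≫ g) (b ≫ y₁) (by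
        rw [Category.assoc, hY.w, reassoc_of% hb, Functor.map_comp])
      refine ⟨ObjectProperty.homMk (Over.homMk (sq.lift a T.obj.hom ha) (sq.lift_snd _ _ _)),
        ObjectProperty.hom_ext _ (Over.OverMorphism.ext (hY.hom_ext ?_ ?_))⟩
      · change (Γ.I.map (sq.lift a T.obj.hom ha) ≫ k) ≫ y₁ = b ≫ y₁
        rw [Category.assoc, hk₁, ← Functor.map_comp, sq.lift_fst, hIa]
      · change (Γ.I.map (sq.lift a T.obj.hom ha) ≫ k) ≫ y₂ = b ≫ y₂
        rw [Category.assoc, hk₂, ← Functor.map_comp, sq.lift_snd, hb]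
  have : IsIso k := inferInstanceAs (IsIso ((ObjectProperty.ι _ ⋙ Over.forget _).map φ))
  exact hY.of_iso (asIso k).symm (Iso.refl _) (Iso.refl _) (Iso.refl _)
    (by simp [← hk₁]) (by simp [← hk₂]) (by simp) (by simp)

theorem TrivialCovering.of_isPullback (hadm : Γ.Admissible) {P A B Z : C} {f : A ⟶ B}
    {g : Z ⟶ B} {q : P ⟶ A} {r : P ⟶ Z} (hf : Γ.TrivialCovering f) (sq : IsPullback q r f g) :
    Γ.TrivialCovering r := by
  refine ⟨Γ.fib_of_isPullback hf.1 sq, ?_⟩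
  have : PreservesLimitsOfSize.{0, 0} Γ.H := Γ.adj.rightAdjoint_preservesLimits
  have hH := (hf.isPullback_map_I hadm sq).map Γ.H
  have rect := sq.paste_horiz hf.2
  rw [← Γ.adj.unit_naturality q, ← Γ.adj.unit_naturality g] at rect
  exact rect.of_right (Γ.adj.unit_naturality r) hH

theorem MonadicExtension.iso_comp {P P' Z : C} (e : P ⟶ P') [IsIso e] {r : P' ⟶ Z}
    (hr : Γ.MonadicExtension r) : Γ.MonadicExtension (e ≫ r) := by
  obtain ⟨hr, pstar, ⟨adj⟩, ⟨_⟩⟩ := hr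
  let Φ := Γ.compAlongEquivalence e
  have hΦ : Φ.functor ⋙ Γ.compAlong r hr ≅ Γ.compAlong (e ≫ r) (Γ.fib_iso_comp e hr) :=
    Γ.compAlongComp _ _ (Γ.fib_of_iso e inferInstance) hr
  refine ⟨Γ.fib_iso_comp e hr, pstar ⋙ Φ.inverse,
    ⟨(Φ.toAdjunction.comp adj).ofNatIsoLeft hΦ⟩,
    MonadicRightAdjoint.nonempty_comp_equivalence pstar Φ.symm⟩

theorem MonadicExtension.of_isPullback (hmon : Γ.MonStable) {P E B Z : C} {p : E ⟶ B}
    {g : Z ⟶ B} {q : P ⟶ E} {r : P ⟶ Z} (hp : Γ.MonadicExtension p) (sq : IsPullback q r p g) :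
    Γ.MonadicExtension r := by
  obtain ⟨P', q', r', sq', hr'⟩ := hmon p g hp
  rw [← sq.isoIsPullback_hom_snd _ _ sq']
  exact hr'.iso_comp _

theorem NormalExtension.of_isPullback (hadm : Γ.Admissible) (hmon : Γ.MonStable)
    {P E B Z : C} {p : E ⟶ B} {g : Z ⟶ B} {q : P ⟶ E} {r : P ⟶ Z}
    (hp : Γ.NormalExtension p) (sq : IsPullback q r p g) : Γ.NormalExtension r := by
  obtain ⟨hp, R, d, c, hR, hd, hc⟩ := hp
  obtain ⟨R', d', c', hR', -⟩ := Γ.fib_pullback r r (Γ.fib_of_isPullback hp.1 sq)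
  obtain ⟨m, hm⟩ := sq.exists_isPullback_kernelPair_fst hR hR'
  obtain ⟨m', hm'⟩ := sq.exists_isPullback_kernelPair_fst hR.flip hR'.flip
  exact ⟨hp.of_isPullback hmon sq, R', d', c', hR', hd.of_isPullback hadm hm,
    hc.of_isPullback hadm hm'⟩

theorem Covering.of_isPullback (hadm : Γ.Admissible) (hmon : Γ.MonStable)
    {P A B Z : C} {f : A ⟶ B} {g : Z ⟶ B} {q : P ⟶ A} {r : P ⟶ Z}
    (hf : Γ.Covering f) (sq : IsPullback q r f g) : Γ.Covering r := by
  obtain ⟨hf, E, p, hp, P₀, q₀, r₀, sq₀, hr₀⟩ := hf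
  obtain ⟨E', q', p', sqE, hp'⟩ := hmon p g hp
  obtain ⟨W, w₁, w₂, hW, -⟩ := Γ.fib_pullback r₀ q' hr₀.1
  obtain ⟨m, hm⟩ := sq.exists_isPullback_snd_of_commSq sq₀ hW sqE.toCommSq
  exact ⟨Γ.fib_of_isPullback hf sq, E', p', hp', W, m, w₂, hm, hr₀.of_isPullback hadm hW⟩

end

/-- Lemma 2.5.
If `Γ` is an admissible Galois structure in which monadic extensions are pullback-stable,
then normal extensions and coverings are pullback-stable: the pullback of a normal
extension (respectively, of a covering) along any morphism of `C` exists and is again a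
normal extension (respectively, a covering). -/
theorem normalExtension_covering_pullback_stable
    (Γ : GaloisStructure C X) (hadm : Γ.Admissible) (hmon : Γ.MonStable) :
    (∀ {E B Z : C} (p : E ⟶ B) (g : Z ⟶ B), Γ.NormalExtension p →
      ∃ (P : C) (q : P ⟶ E) (r : P ⟶ Z), IsPullback q r p g) ∧
    (∀ {P E B Z : C} (p : E ⟶ B) (g : Z ⟶ B) (q : P ⟶ E) (r : P ⟶ Z),
      IsPullback q r p g → Γ.NormalExtension p → Γ.NormalExtension r) ∧
    (∀ {A B Z : C} (f : A ⟶ B) (g : Z ⟶ B), Γ.Covering f →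
      ∃ (P : C) (q : P ⟶ A) (r : P ⟶ Z), IsPullback q r f g) ∧
    (∀ {P A B Z : C} (f : A ⟶ B) (g : Z ⟶ B) (q : P ⟶ A) (r : P ⟶ Z),
      IsPullback q r f g → Γ.Covering f → Γ.Covering r) :=
  ⟨fun _ g hp => Γ.exists_isPullback_of_fib hp.1.1 g,
    fun _ _ _ _ sq hp => hp.of_isPullback hadm hmon sq,
    fun _ g hf => Γ.exists_isPullback_of_fib hf.1 g,
    fun _ _ _ _ sq hf => hf.of_isPullback hadm hmon sq⟩

end GaloisStructure
end GaloisPaper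
end

section
/- The sequence of pointed sets 0 → π₁(E, x) → π₁(B, y) → (F, x) → π₀(E, [x]) → 0 is exact, where the first map is p_*, the second is the monodromy map δ, the third sends a point of the fibre F to its path component in E (with basepoint the component of x), and π₀(E, [x]) denotes the pointed set of path components of E. Explicitly: p_* is injective; δ⁻¹{x} equals the image of p_*; a point z ∈ F lies in the image of δ if and only if z ∈ E_x; and every path component of E contains a point of F. -/
/-!
Once `p_*` is identified with the map induced by `p` and `δ` with the monodromy action of
`π₁(B, y)` on the fibre, everything is unique path and homotopy lifting. A loop at `y` is in the
image of `p_*` exactly when its lift from `x` closes up; lifts from `x` end in `E_x`, and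
conversely a path in `E` from `x` to a point of the fibre is the lift of its own projection.
Every path component of `E` meets the fibre because paths in the path-connected base lift, and
`p_*` is injective because nullhomotopies lift.
-/

open Topology CategoryTheory

attribute [local instance] Path.Homotopic.setoid

namespace GaloisPaper

noncomputable def fromLoop {Y : Type*} [TopologicalSpace Y] {y : Y} (γ : Path y y) :
    FundamentalGroup Y y :=
  FundamentalGroup.fromPath (⟦γ⟧ : Path.Homotopic.Quotient y y)

end GaloisPaper

namespace IsCoveringMap

variable {E X : Type*} [TopologicalSpace E] [TopologicalSpace X] {p : E → X}
  (cov : IsCoveringMap p)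
include cov

theorem monodromy_mk_eq_of_lifts {b b' : X} (γ : Path b b') (e : p ⁻¹' {b}) {e₁ : E}
    (Γ : Path (e : E) e₁) (hΓ : ∀ t, p (Γ t) = γ t) :
    (cov.monodromy (.mk γ) e : E) = e₁ := by
  have hlift : (Γ : C(unitInterval, E)) = cov.liftPath γ e (γ.source.trans e.2.symm) :=
    (cov.eq_liftPath_iff' (γ.source.trans e.2.symm)).mpr ⟨funext hΓ, Γ.source⟩
  exact (congrFun (congrArg DFunLike.coe hlift) 1).symm.trans Γ.target

theorem joined_monodromy {b b' : X} (γ : Path.Homotopic.Quotient b b') (e : p ⁻¹' {b}) :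
    Joined (e : E) (cov.monodromy γ e) :=
  (cov.liftPathQuotient γ e).exists_rep.elim fun Γ _ ↦ ⟨Γ⟩

theorem exists_monodromy_eq_iff_joined {b b' : X} (e : p ⁻¹' {b}) (e' : p ⁻¹' {b'}) :
    (∃ γ : Path.Homotopic.Quotient b b', cov.monodromy γ e = e') ↔ Joined (e : E) e' := by
  refine ⟨fun ⟨γ, hγ⟩ ↦ hγ ▸ cov.joined_monodromy γ e, fun ⟨Γ⟩ ↦ ?_⟩
  refine ⟨.mk ((Γ.map cov.continuous).cast e.2.symm e'.2.symm), Subtype.ext ?_⟩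
  exact cov.monodromy_mk_eq_of_lifts _ e Γ fun _ ↦ rfl

theorem monodromy_eq_self_iff (e : E) (γ : FundamentalGroup X (p e)) :
    cov.monodromy γ ⟨e, rfl⟩ = ⟨e, rfl⟩ ↔
      γ ∈ (FundamentalGroup.map ⟨p, cov.continuous⟩ e).range := by
  refine ⟨fun h ↦ ?_, ?_⟩
  · refine ⟨(cov.liftPathQuotient γ ⟨e, rfl⟩).cast rfl (congrArg Subtype.val h).symm, ?_⟩
    rw [FundamentalGroup.map_apply, Path.Homotopic.Quotient.map_cast,
      cov.map_liftPathQuotient]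
    exact (Path.Homotopic.Quotient.cast_cast ..).trans (Path.Homotopic.Quotient.cast_rfl_rfl _)
  · rintro ⟨Γ, rfl⟩
    exact cov.monodromy_map Γ

end IsCoveringMap

namespace GaloisPaper

theorem eq_fundamentalGroupMap_of_fromLoop {E B : Type*} [TopologicalSpace E]
    [TopologicalSpace B] (f : C(E, B)) (x : E)
    (φ : FundamentalGroup E x →* FundamentalGroup B (f x))
    (hφ : ∀ γ : Path x x, φ (fromLoop γ) = fromLoop (γ.map f.continuous)) :
    φ = FundamentalGroup.map f x := by
  ext g
  induction g using Path.Homotopic.Quotient.ind with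
  | _ γ => exact hφ γ

theorem eq_monodromy_of_fromLoop_lifts {E B : Type*} [TopologicalSpace E] [TopologicalSpace B]
    {p : E → B} (cov : IsCoveringMap p) (x : E)
    (δ : FundamentalGroup B (p x) → (p ⁻¹' {p x} : Set E))
    (hδ : ∀ {e₁ : E} (γ : Path (p x) (p x)) (γ' : Path x e₁),
      (∀ t, p (γ' t) = γ t) → ((δ (fromLoop γ) : E) = e₁))
    (g : FundamentalGroup B (p x)) :
    δ g = cov.monodromy g ⟨x, rfl⟩ := by
  induction g using Path.Homotopic.Quotient.ind with
  | _ γ =>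
    have h₀ : γ 0 = p x := γ.source
    let Γ : Path x (cov.liftPath γ x h₀ 1) :=
      ⟨cov.liftPath γ x h₀, cov.liftPath_zero .., rfl⟩
    have hΓ : ∀ t, p (Γ t) = γ t := congrFun (cov.liftPath_lifts γ x h₀)
    exact Subtype.ext <|
      (hδ γ Γ hΓ).trans (cov.monodromy_mk_eq_of_lifts γ ⟨x, rfl⟩ Γ hΓ).symm

theorem exact_homotopy_sequence_general
    {B E : Type*} [TopologicalSpace B] [TopologicalSpace E]
    [ConnectedSpace B] [LocallyPathConnectedSpace B]
    (p : E → B) (hp : IsCoveringMap p) (x : E)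
    (pStar : FundamentalGroup E x →* FundamentalGroup B (p x))
    (hpStar : ∀ γ : Path x x, pStar (fromLoop γ) = fromLoop (γ.map hp.continuous))
    (δ : FundamentalGroup B (p x) → (p ⁻¹' {p x} : Set E))
    (hδ : ∀ {e₁ : E} (γ : Path (p x) (p x)) (γ' : Path x e₁),
      (∀ t, p (γ' t) = γ t) → ((δ (fromLoop γ) : E) = e₁)) :
    Function.Injective pStar ∧
    (∀ g : FundamentalGroup B (p x), δ g = ⟨x, rfl⟩ ↔ g ∈ Set.range pStar) ∧
    (∀ z : (p ⁻¹' {p x} : Set E), z ∈ Set.range δ ↔ (z : E) ∈ pathComponent x) ∧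
    (∀ comp : ZerothHomotopy E, ∃ z : (p ⁻¹' {p x} : Set E),
      Quotient.mk (pathSetoid E) (z : E) = comp) := by
  have : PathConnectedSpace B := pathConnectedSpace_iff_connectedSpace.mpr ‹_›
  obtain rfl := eq_fundamentalGroupMap_of_fromLoop ⟨p, hp.continuous⟩ x pStar hpStar
  obtain rfl := funext (eq_monodromy_of_fromLoop_lifts hp x δ hδ)
  refine ⟨hp.injective_path_homotopic_map x x, hp.monodromy_eq_self_iff x,
    fun z ↦ hp.exists_monodromy_eq_iff_joined ⟨x, rfl⟩ z, ?_⟩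
  rintro ⟨z₀⟩
  obtain ⟨γ⟩ := PathConnectedSpace.joined (p z₀) (p x)
  exact ⟨hp.monodromy (.mk γ) ⟨z₀, rfl⟩, Quotient.sound (hp.joined_monodromy _ _).symm⟩

/-- Section 8: the exact homotopy sequence
`0 → π₁(E, x) → π₁(B, y) → π₀(F, x) → π₀(E, [x]) → 0`.
In the situation of Statement 17 (with `F = p⁻¹(y)` a discrete fibre, so
`π₀(F, x) = (F, x)`), the sequence of pointed sets
`0 → π₁(E, x) → π₁(B, y) → (F, x) → π₀(E, [x]) → 0` is exact, where the first map is
`p⋆`, the second is the monodromy map `δ`, and the third sends a point of the fibre to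
its path component in `E`.  Explicitly: `p⋆` is injective; `δ⁻¹{x}` equals the image of
`p⋆`; a point `z ∈ F` lies in the image of `δ` if and only if `z ∈ E_x`; and every path
component of `E` contains a point of `F`. -/
theorem exact_homotopy_sequence
    {B E U : Type*} [TopologicalSpace B] [TopologicalSpace E] [TopologicalSpace U]
    [ConnectedSpace B] [LocallyPathConnectedSpace B]
    (p : E → B) (hp : IsCoveringMap p) (hps : Function.Surjective p)
    [LocallyPathConnectedSpace E] (x : E)
    (u : U → B) (hu : IsCoveringMap u)
    [ConnectedSpace U] [LocallyPathConnectedSpace U] [SimplyConnectedSpace U]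
    (w : U) (huw : u w = p x)
    (e : U → E) (he : Continuous e) (hpe : ∀ z, p (e z) = u z) (hew : e w = x)
    (pStar : FundamentalGroup E x →* FundamentalGroup B (p x))
    (hpStar : ∀ γ : Path x x, pStar (fromLoop γ) = fromLoop (γ.map hp.continuous))
    (δ : FundamentalGroup B (p x) → (p ⁻¹' {p x} : Set E))
    (hδ : ∀ {e₁ : E} (γ : Path (p x) (p x)) (γ' : Path x e₁),
      (∀ t, p (γ' t) = γ t) → ((δ (fromLoop γ) : E) = e₁)) :
    Function.Injective pStar ∧
    (∀ g : FundamentalGroup B (p x), δ g = ⟨x, rfl⟩ ↔ g ∈ Set.range pStar) ∧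
    (∀ z : (p ⁻¹' {p x} : Set E), z ∈ Set.range δ ↔ (z : E) ∈ pathComponent x) ∧
    (∀ comp : ZerothHomotopy E, ∃ z : (p ⁻¹' {p x} : Set E),
      Quotient.mk (pathSetoid E) (z : E) = comp) :=
  exact_homotopy_sequence_general p hp x pStar hpStar δ hδ

end GaloisPaper
end
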